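/- Let μ be a continuous capacity on a measurable space (Ω,𝓕) and let 𝓕₀ be a sub-σ-algebra of 𝓕 such that μ(A) ∈ {0,1} for every A ∈ 𝓕₀. Assume in addition that μ(A ∩ B) = 1 for all A, B ∈ 𝓕₀ with μ(A) = 1 and μ(B) = 1. Then for every 𝓕₀-measurable random variable ξ : Ω → ℝ one has μ({ω : ∫_Ω ξ dμ ≤ ξ(ω) ≤ ∫_Ω ξ dμ̄}) = 1, where the integrals are Choquet integrals with respect to μ and to the conjugate capacity μ̄ respectively. -/

import Mathlib

/-! Since `ξ` is `𝓕₀`-measurable, `t ↦ μ {ξ ≥ t}` is a nonincreasing `{0, 1}`-valued function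
which, by continuity of `μ`, equals `1` near `-∞` and `0` near `+∞`. It therefore jumps from `1`
to `0` at a single point `c`, and the Choquet integral of `ξ` is `c`; continuity from above gives
`μ {ξ ≥ c} = 1`. The conjugate capacity is again a continuous capacity that is `{0, 1}`-valued on
`𝓕₀`, so for `d = ∫ ξ dμ̄` the same argument gives `μ̄ {ξ > d} = 0`, i.e. `μ {ξ ≤ d} = 1`.
Both events lie in `𝓕₀` and have capacity one, hence so does their intersection. -/

open MeasureTheory Filter Topology Set

def IsFinAddProb {Ω : Type*} [MeasurableSpace Ω] (P : Set Ω → ℝ) : Prop :=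
  P ∅ = 0 ∧ P Set.univ = 1 ∧
    (∀ A : Set Ω, MeasurableSet A → 0 ≤ P A ∧ P A ≤ 1) ∧
    (∀ A B : Set Ω, MeasurableSet A → MeasurableSet B → Disjoint A B →
      P (A ∪ B) = P A + P B)

def IsCapacity {Ω : Type*} [MeasurableSpace Ω] (μ : Set Ω → ℝ) : Prop :=
  μ ∅ = 0 ∧ μ Set.univ = 1 ∧
    ∀ A B : Set Ω, MeasurableSet A → MeasurableSet B → A ⊆ B → μ A ≤ μ B

def ContBelow {Ω : Type*} [MeasurableSpace Ω] (μ : Set Ω → ℝ) : Prop :=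
  ∀ A : ℕ → Set Ω, (∀ n, MeasurableSet (A n)) → Monotone A →
    Filter.Tendsto (fun n => μ (A n)) Filter.atTop (nhds (μ (⋃ n, A n)))

def ContAbove {Ω : Type*} [MeasurableSpace Ω] (μ : Set Ω → ℝ) : Prop :=
  ∀ A : ℕ → Set Ω, (∀ n, MeasurableSet (A n)) → Antitone A →
    Filter.Tendsto (fun n => μ (A n)) Filter.atTop (nhds (μ (⋂ n, A n)))

def ContAtEmpty {Ω : Type*} [MeasurableSpace Ω] (μ : Set Ω → ℝ) : Prop :=
  ∀ A : ℕ → Set Ω, (∀ n, MeasurableSet (A n)) → Antitone A → (⋂ n, A n) = ∅ →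
    Filter.Tendsto (fun n => μ (A n)) Filter.atTop (nhds 0)

def ContAtUniv {Ω : Type*} [MeasurableSpace Ω] (μ : Set Ω → ℝ) : Prop :=
  ∀ A : ℕ → Set Ω, (∀ n, MeasurableSet (A n)) → Monotone A → (⋃ n, A n) = Set.univ →
    Filter.Tendsto (fun n => μ (A n)) Filter.atTop (nhds 1)

def conjCap {Ω : Type*} (μ : Set Ω → ℝ) (A : Set Ω) : ℝ := 1 - μ Aᶜ

noncomputable def choquet {Ω : Type*} (μ : Set Ω → ℝ) (ξ : Ω → ℝ) : ℝ :=
  (∫ t in Set.Ioi (0:ℝ), μ {ω | ξ ω ≥ t}) +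
    (∫ t in Set.Iio (0:ℝ), (μ {ω | ξ ω ≥ t} - 1))

noncomputable def choquetE {Ω : Type*} (μ : Set Ω → ℝ) (ξ : Ω → EReal) : ℝ :=
  (∫ t in Set.Ioi (0:ℝ), μ {ω | (t : EReal) ≤ ξ ω}) +
    (∫ t in Set.Iio (0:ℝ), (μ {ω | (t : EReal) ≤ ξ ω} - 1))

def UpperProbOf {Ω : Type*} [MeasurableSpace Ω] (𝒮 : Set (Set Ω → ℝ)) (V : Set Ω → ℝ) : Prop :=
  ∀ A : Set Ω, MeasurableSet A → V A = sSup ((fun P => P A) '' 𝒮)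

def LowerProbOf {Ω : Type*} [MeasurableSpace Ω] (𝒮 : Set (Set Ω → ℝ)) (v : Set Ω → ℝ) : Prop :=
  ∀ A : Set Ω, MeasurableSet A → v A = sInf ((fun P => P A) '' 𝒮)

def ErgodicCap {Ω : Type*} [MeasurableSpace Ω] (μ : Set Ω → ℝ) (θ : Ω → Ω) : Prop :=
  ∀ B : Set Ω, MeasurableSet B → θ ⁻¹' B = B →
    (μ B = 0 ∨ μ B = 1) ∧ (μ B = 0 ∨ μ Bᶜ = 0)

def PreservesCap {Ω : Type*} [MeasurableSpace Ω] (μ : Set Ω → ℝ) (θ : Ω → Ω) : Prop :=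
  ∀ A : Set Ω, MeasurableSet A → μ (θ ⁻¹' A) = μ A

def IndepSigmaWrt {Ω : Type*} (μ : Set Ω → ℝ) (m₁ m₂ : MeasurableSpace Ω) : Prop :=
  ∀ A B : Set Ω, MeasurableSet[m₁] A → MeasurableSet[m₂] B → μ (A ∩ B) = μ A * μ B

theorem exists_eq_of_tendsto_of_zero_or_one {u : ℕ → ℝ} {a : ℝ}
    (hu : Tendsto u atTop (𝓝 a)) (hu01 : ∀ n, u n = 0 ∨ u n = 1) (ha01 : a = 0 ∨ a = 1) :
    ∃ n, u n = a := by
  obtain ⟨n, hn⟩ := (hu.eventually (Metric.ball_mem_nhds a one_pos)).exists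
  refine ⟨n, ?_⟩
  rw [Real.dist_eq] at hn
  rcases hu01 n with h | h <;> rcases ha01 with rfl | rfl <;> simp_all

theorem exists_threshold_of_antitone_of_zero_or_one {F : ℝ → ℝ} (hF : Antitone F)
    (hF01 : ∀ t, F t = 0 ∨ F t = 1) (h1 : ∃ t, F t = 1) (h0 : ∃ t, F t = 0) :
    ∃ c, (∀ t < c, F t = 1) ∧ ∀ t, c < t → F t = 0 := by
  obtain ⟨s₀, hs₀⟩ := h0
  have hbdd : BddAbove {t | F t = 1} := ⟨s₀, fun t ht => by
    by_contra! h
    linarith [hF h.le, show F t = 1 from ht]⟩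
  refine ⟨sSup {t | F t = 1}, fun t ht => ?_, fun t ht => ?_⟩
  · obtain ⟨s, hs, hts⟩ := exists_lt_of_lt_csSup h1 ht
    have : 1 ≤ F t := (show F s = 1 from hs) ▸ hF hts.le
    exact (hF01 t).resolve_left (by linarith)
  · exact (hF01 t).resolve_right fun h => ht.not_ge (le_csSup hbdd h)

section Choquet

variable {Ω : Type*} {ν : Set Ω → ℝ} {ξ : Ω → ℝ} {c : ℝ}

theorem choquet_eq_of_step (h1 : ∀ t < c, ν {ω | t ≤ ξ ω} = 1)
    (h0 : ∀ t, c < t → ν {ω | t ≤ ξ ω} = 0) : choquet ν ξ = c := by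
  have hne : ∀ᵐ t : ℝ, t ≠ c := (Set.countable_singleton c).ae_notMem volume
  have hpos : ∀ᵐ t : ℝ, ν {ω | t ≤ ξ ω} = (Iio c).indicator 1 t := by
    filter_upwards [hne] with t ht
    rcases ht.lt_or_gt with h | h
    · simp [h1 t h, h]
    · simp [h0 t h, h.not_gt]
  have hneg : ∀ᵐ t : ℝ, ν {ω | t ≤ ξ ω} - 1 = -(Ici c).indicator 1 t := by
    filter_upwards [hne] with t ht
    rcases ht.lt_or_gt with h | h
    · simp [h1 t h, h.not_ge]
    · simp [h0 t h, h.le]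
  calc choquet ν ξ
      = (∫ t in Ioi 0, (Iio c).indicator 1 t) + ∫ t in Iio 0, -(Ici c).indicator 1 t :=
        congr_arg₂ (· + ·) (integral_congr_ae (ae_restrict_of_ae hpos))
          (integral_congr_ae (ae_restrict_of_ae hneg))
    _ = volume.real (Ioo 0 c) - volume.real (Ico c 0) := by
        rw [integral_neg, integral_indicator_one measurableSet_Iio,
          integral_indicator_one measurableSet_Ici, measureReal_restrict_apply measurableSet_Iio,
          measureReal_restrict_apply measurableSet_Ici, Iio_inter_Ioi, Ici_inter_Iio,
          sub_eq_add_neg]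
    _ = c := by
        rw [Real.volume_real_Ioo, Real.volume_real_Ico, sub_zero, zero_sub, max_zero_sub_eq_self]

end Choquet

theorem IsCapacity.conjCap {Ω : Type*} {mΩ : MeasurableSpace Ω} {μ : Set Ω → ℝ}
    (hμ : IsCapacity μ) : IsCapacity (conjCap μ) := by
  obtain ⟨h0, h1, hmono⟩ := hμ
  refine ⟨by simp [_root_.conjCap, h1], by simp [_root_.conjCap, h0], fun A B hA hB hAB => ?_⟩
  simp only [_root_.conjCap]
  linarith [hmono _ _ hB.compl hA.compl (compl_subset_compl.2 hAB)]

theorem ContAbove.conjCap {Ω : Type*} {mΩ : MeasurableSpace Ω} {μ : Set Ω → ℝ}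
    (hμ : ContAbove μ) : ContBelow (conjCap μ) := fun A hA hmono => by
  simpa [_root_.conjCap, compl_iUnion] using
    (hμ _ (fun n => (hA n).compl) fun _ _ h => compl_subset_compl.2 (hmono h)).const_sub 1

theorem ContBelow.conjCap {Ω : Type*} {mΩ : MeasurableSpace Ω} {μ : Set Ω → ℝ}
    (hμ : ContBelow μ) : ContAbove (conjCap μ) := fun A hA hanti => by
  simpa [_root_.conjCap, compl_iInter] using
    (hμ _ (fun n => (hA n).compl) fun _ _ h => compl_subset_compl.2 (hanti h)).const_sub 1

section LevelSets

variable {Ω : Type*} {mΩ : MeasurableSpace Ω} {ν : Set Ω → ℝ} {ξ : Ω → ℝ}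

theorem IsCapacity.antitone_apply_setOf_le (hν : IsCapacity ν) (hξ : Measurable ξ) :
    Antitone fun t => ν {ω | t ≤ ξ ω} :=
  fun _ _ hst => hν.2.2 _ _ (measurableSet_le measurable_const hξ)
    (measurableSet_le measurable_const hξ) fun _ hω => hst.trans hω

theorem ContBelow.exists_apply_setOf_le_eq_one (hν : IsCapacity ν) (hb : ContBelow ν)
    (hξ : Measurable ξ) (h01 : ∀ t, ν {ω | t ≤ ξ ω} = 0 ∨ ν {ω | t ≤ ξ ω} = 1) :
    ∃ t, ν {ω | t ≤ ξ ω} = 1 := by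
  have hmono : Monotone fun n : ℕ => {ω | -(n : ℝ) ≤ ξ ω} := fun _ _ h =>
    ofPred_subset_ofPred.2 fun _ => le_trans (by gcongr)
  have hunion : ⋃ n : ℕ, {ω | -(n : ℝ) ≤ ξ ω} = univ := eq_univ_of_forall fun ω =>
    mem_iUnion.2 ((exists_nat_ge (-ξ ω)).imp fun _ hn => neg_le.1 hn)
  have hlim := hb _ (fun _ => measurableSet_le measurable_const hξ) hmono
  rw [hunion, hν.2.1] at hlim
  obtain ⟨n, hn⟩ := exists_eq_of_tendsto_of_zero_or_one hlim (fun _ => h01 _) (Or.inr rfl)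
  exact ⟨_, hn⟩

theorem ContAbove.exists_apply_setOf_le_eq_zero (hν : IsCapacity ν) (ha : ContAbove ν)
    (hξ : Measurable ξ) (h01 : ∀ t, ν {ω | t ≤ ξ ω} = 0 ∨ ν {ω | t ≤ ξ ω} = 1) :
    ∃ t, ν {ω | t ≤ ξ ω} = 0 := by
  have hanti : Antitone fun n : ℕ => {ω | (n : ℝ) ≤ ξ ω} := fun _ _ h =>
    ofPred_subset_ofPred.2 fun _ => le_trans (by gcongr)
  have hinter : ⋂ n : ℕ, {ω | (n : ℝ) ≤ ξ ω} = ∅ := eq_empty_of_forall_notMem fun ω hω =>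
    (exists_nat_gt (ξ ω)).elim fun n hn => hn.not_ge (mem_iInter.1 hω n)
  have hlim := ha _ (fun _ => measurableSet_le measurable_const hξ) hanti
  rw [hinter, hν.1] at hlim
  obtain ⟨n, hn⟩ := exists_eq_of_tendsto_of_zero_or_one hlim (fun _ => h01 _) (Or.inl rfl)
  exact ⟨_, hn⟩

theorem ContAbove.apply_setOf_le_eq_one (ha : ContAbove ν) (hξ : Measurable ξ) {c : ℝ}
    (h1 : ∀ t < c, ν {ω | t ≤ ξ ω} = 1) : ν {ω | c ≤ ξ ω} = 1 := by
  have hanti : Antitone fun n : ℕ => {ω | c - 1 / ((n : ℝ) + 1) ≤ ξ ω} := fun _ _ h =>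
    ofPred_subset_ofPred.2 fun _ => le_trans (by gcongr)
  have hinter : ⋂ n : ℕ, {ω | c - 1 / ((n : ℝ) + 1) ≤ ξ ω} = {ω | c ≤ ξ ω} := by
    ext ω
    simp only [mem_iInter, mem_ofPred_eq]
    refine ⟨fun h => ?_, fun h n => le_trans (sub_le_self c Nat.one_div_pos_of_nat.le) h⟩
    have hc : Tendsto (fun n : ℕ => c - 1 / ((n : ℝ) + 1)) atTop (𝓝 c) := by
      simpa using tendsto_one_div_add_atTop_nhds_zero_nat.const_sub c
    exact le_of_tendsto' hc h
  rw [← hinter]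
  refine tendsto_nhds_unique (ha _ (fun _ => measurableSet_le measurable_const hξ) hanti)
    (tendsto_const_nhds.congr fun n => (h1 _ ?_).symm)
  exact sub_lt_self c Nat.one_div_pos_of_nat

theorem ContBelow.apply_setOf_lt_eq_zero (hb : ContBelow ν) (hξ : Measurable ξ) {c : ℝ}
    (h0 : ∀ t, c < t → ν {ω | t ≤ ξ ω} = 0) : ν {ω | c < ξ ω} = 0 := by
  have hmono : Monotone fun n : ℕ => {ω | c + 1 / ((n : ℝ) + 1) ≤ ξ ω} := fun _ _ h =>
    ofPred_subset_ofPred.2 fun _ => le_trans (by gcongr)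
  have hunion : ⋃ n : ℕ, {ω | c + 1 / ((n : ℝ) + 1) ≤ ξ ω} = {ω | c < ξ ω} := by
    ext ω
    simp only [mem_iUnion, mem_ofPred_eq]
    refine ⟨fun ⟨n, hn⟩ => (lt_add_of_pos_right c Nat.one_div_pos_of_nat).trans_le hn,
      fun h => ?_⟩
    obtain ⟨n, hn⟩ := exists_nat_one_div_lt (sub_pos.2 h)
    exact ⟨n, by linarith⟩
  rw [← hunion]
  refine tendsto_nhds_unique (hb _ (fun _ => measurableSet_le measurable_const hξ) hmono)
    (tendsto_const_nhds.congr fun n => (h0 _ ?_).symm)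
  exact lt_add_of_pos_right c Nat.one_div_pos_of_nat

theorem IsCapacity.apply_choquet_le_eq_one_and_apply_choquet_lt_eq_zero (hν : IsCapacity ν)
    (hb : ContBelow ν) (ha : ContAbove ν) (hξ : Measurable ξ)
    (h01 : ∀ t, ν {ω | t ≤ ξ ω} = 0 ∨ ν {ω | t ≤ ξ ω} = 1) :
    ν {ω | choquet ν ξ ≤ ξ ω} = 1 ∧ ν {ω | choquet ν ξ < ξ ω} = 0 := by
  obtain ⟨c, h1, h0⟩ := exists_threshold_of_antitone_of_zero_or_one
    (hν.antitone_apply_setOf_le hξ) h01 (hb.exists_apply_setOf_le_eq_one hν hξ h01)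
    (ha.exists_apply_setOf_le_eq_zero hν hξ h01)
  rw [choquet_eq_of_step h1 h0]
  exact ⟨ha.apply_setOf_le_eq_one hξ h1, hb.apply_setOf_lt_eq_zero hξ h0⟩

end LevelSets

theorem stmt8 {Ω : Type*} [mΩ : MeasurableSpace Ω]
    (μ : Set Ω → ℝ) (hcap : IsCapacity μ) (hb : ContBelow μ) (ha : ContAbove μ)
    (m₀ : MeasurableSpace Ω) (hm₀ : m₀ ≤ mΩ)
    (h01 : ∀ A : Set Ω, MeasurableSet[m₀] A → μ A = 0 ∨ μ A = 1)
    (hcap1 : ∀ A B : Set Ω, MeasurableSet[m₀] A → MeasurableSet[m₀] B →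
      μ A = 1 → μ B = 1 → μ (A ∩ B) = 1)
    (ξ : Ω → ℝ) (hξ : Measurable[m₀] ξ) :
    μ {ω | choquet μ ξ ≤ ξ ω ∧ ξ ω ≤ choquet (conjCap μ) ξ} = 1 := by
  have hξ' : Measurable[mΩ] ξ := hξ.mono hm₀ le_rfl
  have hμ01 (t : ℝ) : μ {ω | t ≤ ξ ω} = 0 ∨ μ {ω | t ≤ ξ ω} = 1 :=
    h01 _ (measurableSet_le measurable_const hξ)
  have hconj01 (t : ℝ) : conjCap μ {ω | t ≤ ξ ω} = 0 ∨ conjCap μ {ω | t ≤ ξ ω} = 1 := by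
    rcases h01 {ω | t ≤ ξ ω}ᶜ (measurableSet_le measurable_const hξ).compl with h | h <;>
      simp [conjCap, h]
  have hlower : μ {ω | choquet μ ξ ≤ ξ ω} = 1 :=
    (hcap.apply_choquet_le_eq_one_and_apply_choquet_lt_eq_zero hb ha hξ' hμ01).1
  have hupper : μ {ω | ξ ω ≤ choquet (conjCap μ) ξ} = 1 := by
    have h := (hcap.conjCap.apply_choquet_le_eq_one_and_apply_choquet_lt_eq_zero ha.conjCap
      hb.conjCap hξ' hconj01).2
    simp only [conjCap, compl_ofPred, not_lt] at h
    linarith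
  exact hcap1 _ _ (measurableSet_le measurable_const hξ) (measurableSet_le hξ measurable_const)
    hlower hupper
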